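/- Let G = F_{n,∞}, M = ⟨x_1, ..., x_n⟩ ≤ G, and H a normal finite-index subgroup of G. Let α be the smallest positive integer with x_0^α ∈ H. Then the subgroup B = ⟨x_0^α, ∪_{j∈ℤ} (H ∩ M)^{x_0^j}⟩ equals ⟨x_0^α, H ∩ M⟩, and the quotient H/B is finite cyclic. -/

import Mathlib

/-- The defining relators of the generalised Thompson group `F_{n,∞}`. -/
def thompsonRels (n : ℕ) : Set (FreeGroup ℕ) :=
  {r | ∃ i j : ℕ, j < i ∧
    r = (FreeGroup.of j)⁻¹ * FreeGroup.of i * FreeGroup.of j * (FreeGroup.of (i + n - 1))⁻¹}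

/-- The generalised Thompson group `F_{n,∞}`. -/
abbrev FnInfty (n : ℕ) : Type := PresentedGroup (thompsonRels n)

/-- The generator `x_i` of `F_{n,∞}`. -/
def xg (n i : ℕ) : FnInfty n := PresentedGroup.of i

/-- The subgroup `M = ⟨x_1, ..., x_n⟩` of `F_{n,∞}`. -/
def Msub (n : ℕ) : Subgroup (FnInfty n) := Subgroup.closure (xg n '' {i | 1 ≤ i ∧ i ≤ n})


/-!
Let `φ : G → ℤ` be the exponent sum of `x_0`. Since `x_0⁻¹ M x_0 ≤ M`, the conjugates
`x_0^t M x_0^{-t}` (`t ≥ 0`) increase, and their union `U` is a subgroup normalised by `x_0`.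
It contains every `x_i` with `i ≥ 1`, so `G = U ⟨x_0⟩` and hence `ker φ ≤ U`.
Conjugating `H ∩ M` by `x_0^j` is conjugating by `x_0^(j mod α)`, which keeps it inside `H ∩ M`,
followed by a power of `x_0^α`; this gives `B = ⟨x_0^α, H ∩ M⟩` and also `H ∩ ker φ ≤ B`.
So `H / B` is a quotient of the cyclic group `φ(H)`, and it is finite because `φ(B)` contains
`φ(x_0^α) = α ≠ 0`.
-/

namespace Subgroup

variable {G : Type*} [Group G] {K : Subgroup G} {x : G}

theorem conj_pow_mem (hK : ∀ k ∈ K, x⁻¹ * k * x ∈ K) (t : ℕ) {k : G}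
    (hk : k ∈ K) : (x ^ t)⁻¹ * k * x ^ t ∈ K := by
  induction t with
  | zero => simpa using hk
  | succ t ih => simpa [pow_succ, mul_assoc] using hK _ ih

/-- `⨆ₜ xᵗ K x⁻ᵗ` over `t ≥ 0`: the increasing union of these conjugates when `x⁻¹ K x ≤ K`. -/
def conjPowSup (K : Subgroup G) (x : G) : Subgroup G :=
  ⨆ t : ℕ, K.comap (MulAut.conj (x ^ t)⁻¹).toMonoidHom

theorem mem_conjPowSup (hK : ∀ k ∈ K, x⁻¹ * k * x ∈ K) {g : G} :
    g ∈ K.conjPowSup x ↔ ∃ t : ℕ, (x ^ t)⁻¹ * g * x ^ t ∈ K := by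
  have hmono : Monotone fun t : ℕ ↦ K.comap (MulAut.conj (x ^ t)⁻¹).toMonoidHom := by
    refine monotone_nat_of_le_succ fun t g hg ↦ ?_
    simpa [pow_succ, mul_assoc] using hK _ (by simpa [mul_assoc] using hg)
  rw [conjPowSup, mem_iSup_of_directed hmono.directed_le]
  simp only [mem_comap, MulEquiv.coe_toMonoidHom, MulAut.conj_apply, inv_inv]

theorem le_conjPowSup : K ≤ K.conjPowSup x :=
  le_iSup_of_le 0 fun k hk ↦ by simpa using hk

theorem conjPowSup_le {N : Subgroup G} [hN : N.Normal] (hKN : K ≤ N) :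
    K.conjPowSup x ≤ N :=
  iSup_le fun t g hg ↦ by
    simp only [mem_comap, MulEquiv.coe_toMonoidHom, MulAut.conj_apply, inv_inv] at hg
    simpa [mul_assoc] using hN.conj_mem _ (hKN hg) (x ^ t)

theorem mem_normalizer_conjPowSup (hK : ∀ k ∈ K, x⁻¹ * k * x ∈ K) :
    x ∈ normalizer (K.conjPowSup x : Set G) := by
  refine mem_normalizer_iff.2 fun g ↦ ?_
  simp only [mem_conjPowSup hK]
  have shift (t : ℕ) : (x ^ (t + 1))⁻¹ * (x * g * x⁻¹) * x ^ (t + 1) = (x ^ t)⁻¹ * g * x ^ t := by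
    group
  constructor
  · exact fun ⟨t, ht⟩ ↦ ⟨t + 1, by rwa [shift]⟩
  · exact fun ⟨t, ht⟩ ↦ ⟨t, by rw [← shift]; convert hK _ ht using 1; group⟩

theorem ker_le_of_sup_zpowers_eq_top {f : G →* Multiplicative ℤ}
    (hfx : f x = Multiplicative.ofAdd 1) {U : Subgroup G} (hUf : U ≤ f.ker)
    (hxU : x ∈ normalizer (U : Set G)) (htop : U ⊔ zpowers x = ⊤) : f.ker ≤ U := by
  intro g hg
  have hg' : g ∈ ((U ⊔ zpowers x : Subgroup G) : Set G) := htop ▸ mem_top g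
  rw [coe_mul_of_right_le_normalizer_left U _ (zpowers_le.2 hxU)] at hg'
  obtain ⟨u, hu, _, ⟨k, rfl⟩, rfl⟩ := hg'
  have hfu : f u = 1 := hUf hu
  have hk : k = 0 := by
    simpa [hfu, hfx, ← ofAdd_zsmul] using hg
  simpa [hk] using hu

theorem conj_zpow_mem_closure (hK : ∀ k ∈ K, x⁻¹ * k * x ∈ K) {m : ℕ}
    (hm : 0 < m) {k : G} (hk : k ∈ K) (j : ℤ) :
    (x ^ j)⁻¹ * k * x ^ j ∈ closure ({x ^ m} ∪ K) := by
  obtain ⟨r, hr⟩ := Int.eq_ofNat_of_zero_le (Int.emod_nonneg j (by omega : (m : ℤ) ≠ 0))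
  have hj : x ^ j = x ^ r * (x ^ m) ^ (j / m) := by
    rw [← zpow_natCast, ← zpow_natCast, ← zpow_mul, ← zpow_add, ← hr, Int.emod_add_mul_ediv]
  have hxm : x ^ m ∈ closure ({x ^ m} ∪ (K : Set G)) := subset_closure (Or.inl rfl)
  have hkr : (x ^ r)⁻¹ * k * x ^ r ∈ closure ({x ^ m} ∪ (K : Set G)) :=
    subset_closure (Or.inr (conj_pow_mem hK r hk))
  rw [hj]
  simpa [mul_assoc] using
    mul_mem (mul_mem (inv_mem (zpow_mem hxm (j / m))) hkr) (zpow_mem hxm (j / m))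

theorem closure_union_iUnion_conj_zpow (hK : ∀ k ∈ K, x⁻¹ * k * x ∈ K) {m : ℕ} (hm : 0 < m) :
    closure ({x ^ m} ∪ ⋃ j : ℤ, (fun h ↦ (x ^ j)⁻¹ * h * x ^ j) '' K) =
      closure ({x ^ m} ∪ K) := by
  refine le_antisymm (closure_le _ |>.2 <| Set.union_subset (fun _ h ↦ subset_closure (Or.inl h))
    (Set.iUnion_subset fun j ↦ Set.image_subset_iff.2 fun k hk ↦ conj_zpow_mem_closure hK hm hk j))
    (closure_mono <| Set.union_subset_union_right _ fun k hk ↦ Set.mem_iUnion.2 ⟨0, k, hk, by simp⟩)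

theorem inf_conjPowSup_le_closure {H : Subgroup G} [hH : H.Normal]
    (hK : ∀ k ∈ K, x⁻¹ * k * x ∈ K) {m : ℕ} (hm : 0 < m) :
    H ⊓ K.conjPowSup x ≤ closure ({x ^ m} ∪ (H ⊓ K : Subgroup G)) := by
  rintro g ⟨hgH, hgK⟩
  obtain ⟨t, ht⟩ := (mem_conjPowSup hK).1 hgK
  have hHK : ∀ k ∈ H ⊓ K, x⁻¹ * k * x ∈ H ⊓ K :=
    fun k ⟨hkH, hkK⟩ ↦ ⟨hH.conj_mem' k hkH x, hK k hkK⟩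
  simpa [mul_assoc] using
    conj_zpow_mem_closure hHK hm ⟨hH.conj_mem' g hgH (x ^ t), ht⟩ (-t)

theorem relIndex_ne_zero_of_inf_ker_le {Q : Type*} [Group Q] {f : G →* Q} {B H : Subgroup G}
    (hBH : B ≤ H) (hker : H ⊓ f.ker ≤ B) (hB : (B.map f).index ≠ 0) : B.relIndex H ≠ 0 := by
  have hB' : H ⊓ (B.map f).comap f = B := by
    refine le_antisymm (fun g ⟨hgH, hg⟩ ↦ ?_) (le_inf hBH (le_comap_map f B))
    obtain ⟨b, hb, hfb⟩ := mem_map.1 hg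
    have hbg : b⁻¹ * g ∈ H ⊓ f.ker := mem_inf.2 ⟨mul_mem (inv_mem (hBH hb)) hgH, by simp [hfb]⟩
    simpa using mul_mem hb (hker hbg)
  rw [← hB', inf_relIndex_left, relIndex_comap]
  exact fun h ↦ hB (Nat.eq_zero_of_zero_dvd (h ▸ relIndex_dvd_index_of_le (map_mono hBH)))

theorem index_ne_zero_of_ofAdd_mem {K : Subgroup (Multiplicative ℤ)} {a : ℤ} (ha : a ≠ 0)
    (hK : Multiplicative.ofAdd a ∈ K) : K.index ≠ 0 := by
  rw [← AddSubgroup.toSubgroup.apply_symm_apply K, AddSubgroup.index_toSubgroup]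
  refine fun h ↦ ?_
  have := h ▸ AddSubgroup.index_dvd_of_le
    ((AddSubgroup.zmultiples_le (g := a) (H := AddSubgroup.toSubgroup.symm K)).2 hK)
  simp_all

theorem exists_mul_zpow_mem_of_inf_ker_le {Q : Type*} [Group Q] {f : G →* Q} {B H : Subgroup G}
    [IsCyclic (H.map f)] (hker : H ⊓ f.ker ≤ B) : ∃ h ∈ H, ∀ g ∈ H, ∃ k : ℤ, g * h ^ k ∈ B := by
  obtain ⟨⟨_, h, hh, rfl⟩, hgen⟩ := IsCyclic.exists_generator (α := H.map f)
  refine ⟨h, hh, fun g hg ↦ ?_⟩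
  obtain ⟨k, hk⟩ := mem_zpowers_iff.1 (hgen ⟨f g, mem_map_of_mem f hg⟩)
  refine ⟨-k, hker ⟨mul_mem hg (zpow_mem hh _), ?_⟩⟩
  simpa [zpow_neg, mul_inv_eq_one] using (congrArg Subtype.val hk).symm

end Subgroup

namespace FnInfty

theorem xg_conj {n i j : ℕ} (h : j < i) : (xg n j)⁻¹ * xg n i * xg n j = xg n (i + n - 1) :=
  eq_of_mul_inv_eq_one <| by
    simpa [xg, PresentedGroup.of] using
      PresentedGroup.one_of_mem (rels := thompsonRels n) ⟨i, j, h, rfl⟩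

theorem xg_mem_Msub {n : ℕ} (hn : 2 ≤ n) {k : ℕ} (hk : 1 ≤ k) : xg n k ∈ Msub n := by
  induction k using Nat.strong_induction_on with
  | _ k ih =>
    rcases le_or_gt k n with hkn | hkn
    · exact Subgroup.subset_closure ⟨k, ⟨hk, hkn⟩, rfl⟩
    · have hx1 : xg n 1 ∈ Msub n := Subgroup.subset_closure ⟨1, ⟨le_rfl, by omega⟩, rfl⟩
      have hrel := xg_conj (n := n) (i := k - (n - 1)) (j := 1) (by omega)
      rw [show k - (n - 1) + n - 1 = k by omega] at hrel
      rw [← hrel]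
      exact mul_mem (mul_mem (inv_mem hx1) (ih _ (by omega) (by omega))) hx1

theorem xg_zero_conj_mem_Msub {n : ℕ} (hn : 2 ≤ n) :
    ∀ m ∈ Msub n, (xg n 0)⁻¹ * m * xg n 0 ∈ Msub n := by
  suffices Msub n ≤ (Msub n).comap (MulAut.conj (xg n 0)⁻¹).toMonoidHom by
    simpa using fun m hm ↦ this hm
  refine Subgroup.closure_le _ |>.2 ?_
  rintro _ ⟨i, ⟨hi, -⟩, rfl⟩
  simpa [xg_conj (n := n) (j := 0) hi] using xg_mem_Msub hn (k := i + n - 1) (by omega)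

/-- The exponent sum of `x_0`. It is well defined because `x_0` occurs in the relations only as
the conjugating letter (`i + n - 1 ≠ 0` needs `n ≥ 1`). -/
def x0Exponent (n : ℕ) (hn : 1 ≤ n) : FnInfty n →* Multiplicative ℤ :=
  PresentedGroup.toGroup (f := fun i ↦ if i = 0 then Multiplicative.ofAdd 1 else 1) <| by
    rintro _ ⟨i, j, hij, rfl⟩
    by_cases hj : j = 0 <;> simp [hj, show i ≠ 0 by omega, show i + n - 1 ≠ 0 by omega]

theorem x0Exponent_xg {n : ℕ} (hn : 1 ≤ n) (i : ℕ) :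
    x0Exponent n hn (xg n i) = if i = 0 then Multiplicative.ofAdd 1 else 1 :=
  PresentedGroup.toGroup.of _

theorem ker_x0Exponent_le {n : ℕ} (hn : 2 ≤ n) :
    (x0Exponent n (by omega)).ker ≤ (Msub n).conjPowSup (xg n 0) := by
  have hM := xg_zero_conj_mem_Msub hn
  refine Subgroup.ker_le_of_sup_zpowers_eq_top (by simp [x0Exponent_xg]) ?_
    (Subgroup.mem_normalizer_conjPowSup hM) ?_
  · refine Subgroup.conjPowSup_le <| Subgroup.closure_le _ |>.2 ?_
    rintro _ ⟨i, ⟨hi, -⟩, rfl⟩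
    simp [x0Exponent_xg, show i ≠ 0 by omega]
  · rw [eq_top_iff, ← PresentedGroup.closure_range_of, Subgroup.closure_le]
    rintro _ ⟨_ | i, rfl⟩
    · exact Subgroup.mem_sup_right (Subgroup.mem_zpowers _)
    · exact Subgroup.mem_sup_left (Subgroup.le_conjPowSup (xg_mem_Msub hn (by omega)))

end FnInfty

open FnInfty Subgroup

theorem stmt_7_general (n : ℕ) (hn : 2 ≤ n) (H : Subgroup (FnInfty n)) (hnorm : H.Normal)
    (α : ℕ) (hα : 0 < α) (hmem : (xg n 0) ^ α ∈ H)
    (B : Subgroup (FnInfty n))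
    (hB : B = Subgroup.closure ({(xg n 0) ^ α} ∪
      ⋃ j : ℤ, (fun h => ((xg n 0) ^ j)⁻¹ * h * (xg n 0) ^ j) '' ((H ⊓ Msub n : Subgroup _) : Set (FnInfty n)))) :
    B = Subgroup.closure ({(xg n 0) ^ α} ∪ ((H ⊓ Msub n : Subgroup _) : Set (FnInfty n))) ∧
    B ≤ H ∧ B.relIndex H ≠ 0 ∧
    (∃ h ∈ H, ∀ g ∈ H, ∃ k : ℤ, g * h ^ k ∈ B) := by
  have hM := xg_zero_conj_mem_Msub hn
  have hHM : ∀ k ∈ H ⊓ Msub n, (xg n 0)⁻¹ * k * xg n 0 ∈ H ⊓ Msub n :=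
    fun k hk ↦ ⟨hnorm.conj_mem' k hk.1 _, hM k hk.2⟩
  have hBC : B = closure ({xg n 0 ^ α} ∪ (H ⊓ Msub n : Subgroup _)) :=
    hB.trans (closure_union_iUnion_conj_zpow hHM hα)
  have hBH : B ≤ H := hBC ▸ closure_le _ |>.2 (Set.union_subset (by simpa using hmem)
    fun _ hk ↦ (mem_inf.1 hk).1)
  set φ := x0Exponent n (by omega)
  have hker : H ⊓ φ.ker ≤ B :=
    hBC ▸ (inf_le_inf_left H (ker_x0Exponent_le hn)).trans (inf_conjPowSup_le_closure hM hα)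
  have hφB : Multiplicative.ofAdd (α : ℤ) ∈ B.map φ :=
    ⟨xg n 0 ^ α, hBC ▸ Subgroup.subset_closure (Or.inl rfl),
      by simp [φ, x0Exponent_xg, ← ofAdd_nsmul]⟩
  exact ⟨hBC, hBH, relIndex_ne_zero_of_inf_ker_le hBH hker
    (index_ne_zero_of_ofAdd_mem (by omega) hφB), exists_mul_zpow_mem_of_inf_ker_le hker⟩

/-- Let `H` be a normal finite-index subgroup of `G = F_{n,∞}`, `α` the smallest positive
integer with `x_0^α ∈ H`, and `B = ⟨x_0^α, ⋃_{j ∈ ℤ} (H ∩ M)^{x_0^j}⟩`. Then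
`B = ⟨x_0^α, H ∩ M⟩` and `H/B` is finite cyclic. -/
theorem stmt_7 (n : ℕ) (hn : 2 ≤ n) (H : Subgroup (FnInfty n)) (hnorm : H.Normal)
    (hfi : H.FiniteIndex) (α : ℕ) (hα : 0 < α) (hmem : (xg n 0) ^ α ∈ H)
    (hmin : ∀ β : ℕ, 0 < β → (xg n 0) ^ β ∈ H → α ≤ β)
    (B : Subgroup (FnInfty n))
    (hB : B = Subgroup.closure ({(xg n 0) ^ α} ∪
      ⋃ j : ℤ, (fun h => ((xg n 0) ^ j)⁻¹ * h * (xg n 0) ^ j) '' ((H ⊓ Msub n : Subgroup _) : Set (FnInfty n)))) :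
    B = Subgroup.closure ({(xg n 0) ^ α} ∪ ((H ⊓ Msub n : Subgroup _) : Set (FnInfty n))) ∧
    B ≤ H ∧ B.relIndex H ≠ 0 ∧
    (∃ h ∈ H, ∀ g ∈ H, ∃ k : ℤ, g * h ^ k ∈ B) :=
  stmt_7_general n hn H hnorm α hα hmem B hB
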